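/- Define μ̂ to be the set of ultrafilters x on ℕ⁺ such that every nonempty upward closed set (under divisibility) belongs to x. Then μ̂ is a two-sided ideal of the semigroup (βℕ⁺, ·): if x ∈ μ̂ and y is any ultrafilter, then both x·y and y·x lie in μ̂. -/
import Mathlib

def UpClosed (A : Set ℕ+) : Prop := ∀ a ∈ A, ∀ n : ℕ+, a ∣ n → n ∈ A

def DownClosed (A : Set ℕ+) : Prop := ∀ a ∈ A, ∀ n : ℕ+, n ∣ a → n ∈ A

def quotBy (A : Set ℕ+) (n : ℕ+) : Set ℕ+ := {m : ℕ+ | m * n ∈ A}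

def Thick (A : Set ℕ+) : Prop := ∀ E : Finset ℕ+, (⋂ n ∈ E, quotBy A n).Nonempty

def Syndetic (A : Set ℕ+) : Prop := ∃ E : Finset ℕ+, (⋃ n ∈ E, quotBy A n) = Set.univ

def muHat : Set (Ultrafilter ℕ+) :=
  {x : Ultrafilter ℕ+ | ∀ A : Set ℕ+, UpClosed A → A.Nonempty → A ∈ x}

theorem muHat_ideal (op : Ultrafilter ℕ+ → Ultrafilter ℕ+ → Ultrafilter ℕ+)
    (hop : ∀ (x y : Ultrafilter ℕ+) (A : Set ℕ+),
      A ∈ op x y ↔ {n : ℕ+ | {m : ℕ+ | n * m ∈ A} ∈ y} ∈ x)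
    (x : Ultrafilter ℕ+) (hx : x ∈ muHat) (y : Ultrafilter ℕ+) :
    op x y ∈ muHat ∧ op y x ∈ muHat := by
  constructor
  · intro A hup hne
    rw [hop]
    have hsub : A ⊆ {n : ℕ+ | {m : ℕ+ | n * m ∈ A} ∈ y} := by
      intro n hn
      have : {m : ℕ+ | n * m ∈ A} = Set.univ := by
        ext m; simp only [Set.mem_setOf_eq, Set.mem_univ, iff_true]
        exact hup n hn (n * m) ⟨m, rfl⟩
      show _ ∈ y; rw [this]; exact Filter.univ_mem
    exact Filter.mem_of_superset (hx A hup hne) hsub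
  · intro A hup hne
    rw [hop]
    have : {n : ℕ+ | {m : ℕ+ | n * m ∈ A} ∈ x} = Set.univ := by
      ext n; simp only [Set.mem_setOf_eq, Set.mem_univ, iff_true]
      obtain ⟨a, ha⟩ := hne
      refine hx _ ?_ ⟨a, hup a ha (n * a) ⟨n, mul_comm _ _⟩⟩
      intro b hb m hbm
      exact hup (n * b) hb (n * m) (mul_dvd_mul_left n hbm)
    rw [this]; exact Filter.univ_mem
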